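/- arXiv:1512.05285 — 2 statements merged into one kernel-verified Lean document; each statement's English description precedes it below -/
import Mathlib

section
/- Let V be a finite-dimensional real vector space with symmetric positive semidefinite bilinear forms a and b_i, i = 0,...,N, where each b_i is positive definite on a subspace V_i ⊆ V with V = V_0 + V_1 + ... + V_N (in the sense that every u ∈ V decomposes as a sum of elements of the V_i). Suppose there is C_0 > 0 such that every u ∈ V admits a decomposition u = Σ_{i=0}^N u_i with u_i ∈ V_i and Σ_{i=0}^N a(u_i, u_i) ≤ C_0² a(u,u). Define T_i : V → V_i by a(T_i u, v) = a(u, v) for all v ∈ V_i (assume a is positive definite on each V_i), and T = Σ_{i=0}^N T_i. Then for every u ∈ V, a(T u, u) ≥ C_0^{-2} a(u,u). -/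
/-!
Since `Tᵢ` is the `a`-orthogonal projection onto `Vᵢ`, `a(Tu, u) = Σ a(Tᵢu, Tᵢu)`, and for a
decomposition `u = Σ uᵢ` with `uᵢ ∈ Vᵢ` we get `a(u, u) = Σ a(u, uᵢ) = Σ a(Tᵢu, uᵢ)`.
Cauchy–Schwarz for the form `Σ a(xᵢ, yᵢ)` on tuples then gives
`a(u, u)² ≤ a(Tu, u) · Σ a(uᵢ, uᵢ) ≤ a(Tu, u) · C₀² a(u, u)`.
-/

open Finset

namespace LinearMap.BilinForm

variable {R M ι : Type*} [CommRing R] [AddCommGroup M] [Module R M] [Fintype ι]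
  (B : LinearMap.BilinForm R M)

theorem sum_apply_sq_le_of_symm [LinearOrder R] [IsStrictOrderedRing R]
    (hs : ∀ x, 0 ≤ B x x) (hB : LinearMap.IsSymm B) (x y : ι → M) :
    (∑ i, B (x i) (y i)) ^ 2 ≤ (∑ i, B (x i) (x i)) * ∑ i, B (y i) (y i) := by
  let B' : LinearMap.BilinForm R (ι → M) := ∑ i, B.compl₁₂ (proj i) (proj i)
  have hB' : ∀ x y, B' x y = ∑ i, B (x i) (y i) := by simp [B']
  have hs' : ∀ x, 0 ≤ B' x x := fun x => hB' x x ▸ sum_nonneg fun i _ => hs (x i)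
  have hB'symm : LinearMap.IsSymm B' := ⟨fun x y => by
    simp only [hB', RingHom.id_apply]
    exact sum_congr rfl fun i _ => hB.eq (x i) (y i)⟩
  simpa only [hB'] using B'.apply_sq_le_of_symm hs' hB'symm x y

variable {W : ι → Submodule R M} {P : ι → M → M}

theorem apply_sum_projection_self (hB : LinearMap.IsSymm B) (hmem : ∀ i u, P i u ∈ W i)
    (hproj : ∀ i u, ∀ v ∈ W i, B (P i u) v = B u v) (u : M) :
    B (∑ i, P i u) u = ∑ i, B (P i u) (P i u) := by
  simp only [map_sum, LinearMap.sum_apply]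
  exact sum_congr rfl fun i _ => by rw [hproj i u _ (hmem i u)]; exact hB.eq _ _

theorem apply_self_eq_sum_projection_apply (hproj : ∀ i u, ∀ v ∈ W i, B (P i u) v = B u v)
    {u : M} {us : ι → M} (hus : ∀ i, us i ∈ W i) (hu : u = ∑ i, us i) :
    B u u = ∑ i, B (P i u) (us i) := by
  calc B u u = ∑ i, B u (us i) := by rw [← map_sum, ← hu]
    _ = ∑ i, B (P i u) (us i) := sum_congr rfl fun i _ => (hproj i u _ (hus i)).symm

theorem apply_self_sq_le_apply_sum_projection_mul [LinearOrder R] [IsStrictOrderedRing R]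
    (hs : ∀ x, 0 ≤ B x x) (hB : LinearMap.IsSymm B) (hmem : ∀ i u, P i u ∈ W i)
    (hproj : ∀ i u, ∀ v ∈ W i, B (P i u) v = B u v)
    {u : M} {us : ι → M} (hus : ∀ i, us i ∈ W i) (hu : u = ∑ i, us i) :
    B u u ^ 2 ≤ B (∑ i, P i u) u * ∑ i, B (us i) (us i) := by
  rw [B.apply_self_eq_sum_projection_apply hproj hus hu, B.apply_sum_projection_self hB hmem hproj]
  exact B.sum_apply_sq_le_of_symm hs hB _ _

end LinearMap.BilinForm

theorem stmt_7_general {V : Type*} [AddCommGroup V] [Module ℝ V]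
    (a : LinearMap.BilinForm ℝ V)
    (ha_symm : ∀ u v : V, a u v = a v u)
    (ha_pos : ∀ v : V, v ≠ 0 → 0 < a v v)
    (N : ℕ) (Vi : Fin (N + 1) → Submodule ℝ V)
    (C0 : ℝ)
    (hstable : ∀ u : V, ∃ us : Fin (N + 1) → V, (∀ i, us i ∈ Vi i) ∧
      u = ∑ i, us i ∧ ∑ i, a (us i) (us i) ≤ C0 ^ 2 * a u u)
    (T : Fin (N + 1) → V → V)
    (hTmem : ∀ i u, T i u ∈ Vi i)
    (hTproj : ∀ i u, ∀ v ∈ Vi i, a (T i u) v = a u v) :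
    ∀ u : V, C0 ^ (-2 : ℤ) * a u u ≤ a (∑ i, T i u) u := by
  intro u
  have ha_nonneg : ∀ v, 0 ≤ a v v := fun v => by
    rcases eq_or_ne v 0 with rfl | hv
    · simp
    · exact (ha_pos v hv).le
  obtain ⟨us, hus, hu, hbound⟩ := hstable u
  have hTu_nonneg : 0 ≤ a (∑ i, T i u) u := by
    rw [a.apply_sum_projection_self ⟨ha_symm⟩ hTmem hTproj]
    exact sum_nonneg fun i _ => ha_nonneg _
  have hsq : a u u ^ 2 ≤ a (∑ i, T i u) u * (C0 ^ 2 * a u u) :=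
    (a.apply_self_sq_le_apply_sum_projection_mul ha_nonneg ⟨ha_symm⟩ hTmem hTproj hus hu).trans
      (mul_le_mul_of_nonneg_left hbound hTu_nonneg)
  rcases (ha_nonneg u).eq_or_lt with hzero | hpos
  · simpa [← hzero] using hTu_nonneg
  -- in Lean `0 ^ (-2) = 0`, so for `C0 = 0` the claim is just `0 ≤ a(Tu, u)`
  rcases eq_or_ne C0 0 with rfl | hC0
  · simpa using hTu_nonneg
  rw [zpow_neg, zpow_two, ← sq, inv_mul_le_iff₀ (by positivity)]
  nlinarith

/-- Lions' lemma: the stable decomposition implies the lower bound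
`a(Tu, u) ≥ C₀⁻² a(u,u)` for the additive Schwarz operator `T = Σ Tᵢ`. -/
theorem stmt_7 {V : Type*} [AddCommGroup V] [Module ℝ V] [FiniteDimensional ℝ V]
    (a : LinearMap.BilinForm ℝ V)
    (ha_symm : ∀ u v : V, a u v = a v u)
    (ha_pos : ∀ v : V, v ≠ 0 → 0 < a v v)
    (N : ℕ) (Vi : Fin (N + 1) → Submodule ℝ V)
    (hspan : ∀ u : V, ∃ us : Fin (N + 1) → V, (∀ i, us i ∈ Vi i) ∧ u = ∑ i, us i)
    (C0 : ℝ) (hC0 : 0 < C0)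
    (hstable : ∀ u : V, ∃ us : Fin (N + 1) → V, (∀ i, us i ∈ Vi i) ∧
      u = ∑ i, us i ∧ ∑ i, a (us i) (us i) ≤ C0 ^ 2 * a u u)
    (T : Fin (N + 1) → V → V)
    (hTmem : ∀ i u, T i u ∈ Vi i)
    (hTproj : ∀ i u, ∀ v ∈ Vi i, a (T i u) v = a u v) :
    ∀ u : V, C0 ^ (-2 : ℤ) * a u u ≤ a (∑ i, T i u) u :=
  stmt_7_general a ha_symm ha_pos N Vi C0 hstable T hTmem hTproj
end

section
/- In the abstract Schwarz framework with a-orthogonal projections T_i : V → V_i onto subspaces V_i, i = 1,...,N, suppose E = (E_{ij}) with 0 ≤ E_{ij} ≤ 1 satisfies a(u_i, u_j) ≤ E_{ij} a(u_i,u_i)^{1/2} a(u_j,u_j)^{1/2} for all u_i ∈ V_i, u_j ∈ V_j. Then for all u ∈ V, a((Σ_{i=1}^N T_i) u, (Σ_{i=1}^N T_i) u) ≤ ρ(E)² · Σ_{i=1}^N a(T_i u, T_i u), where ρ(E) is the spectral radius of the symmetric matrix E. -/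
/-!
With `xᵢ = a(Tᵢ u, Tᵢ u)^{1/2}`, the strengthened Cauchy–Schwarz inequality bounds
`a(Σ Tᵢ u, Σ Tᵢ u)` by the quadratic form `xᵀ E x`, which is at most `ρ(E) |x|² = ρ(E) Σ a(Tᵢ u, Tᵢ u)`
because the spectral radius of the symmetric matrix `E` is its `ℓ²` operator norm. Finally
`ρ(E) ≥ 1` unless every `Tᵢ u` vanishes: the inequality for `uᵢ = uⱼ = Tᵢ u ≠ 0` forces `Eᵢᵢ ≥ 1`.
-/

open Finset Matrix

namespace Matrix.IsHermitian

variable {n : Type*} [Fintype n] [DecidableEq n] {A : Matrix n n ℝ}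

theorem dotProduct_mulVec_self_le (hA : A.IsHermitian) (x : n → ℝ) :
    x ⬝ᵥ A *ᵥ x ≤ (spectralRadius ℝ A).toReal * (x ⬝ᵥ x) := by
  set T := toEuclideanCLM (n := n) (𝕜 := ℝ) A
  have hT : IsSelfAdjoint T := hA.isSelfAdjoint.map _
  have hρ : (spectralRadius ℝ A).toReal = ‖T‖ := by
    rw [spectralRadius, ← AlgEquiv.spectrum_eq (toEuclideanCLM (n := n) (𝕜 := ℝ)) A,
      ← spectralRadius, T.spectralRadius_eq_nnnorm hT]
    rfl
  set y : EuclideanSpace ℝ n := WithLp.toLp 2 x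
  have hxx : x ⬝ᵥ x = ‖y‖ ^ 2 := by
    rw [← real_inner_self_eq_norm_sq, EuclideanSpace.inner_eq_star_dotProduct]
    simp [y]
  calc x ⬝ᵥ A *ᵥ x = inner ℝ y (T y) := (inner_toEuclideanCLM A y y).symm
    _ ≤ ‖y‖ * ‖T y‖ := real_inner_le_norm _ _
    _ ≤ ‖y‖ * (‖T‖ * ‖y‖) := by gcongr; exact T.le_opNorm y
    _ = (spectralRadius ℝ A).toReal * (x ⬝ᵥ x) := by rw [hρ, hxx]; ring

theorem apply_self_le_spectralRadius (hA : A.IsHermitian) (i : n) :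
    A i i ≤ (spectralRadius ℝ A).toReal := by
  simpa [mulVec_single_one, single_dotProduct] using hA.dotProduct_mulVec_self_le (Pi.single i 1)

end Matrix.IsHermitian

theorem LinearMap.BilinForm.apply_sum_sum_le_dotProduct_mulVec {V ι : Type*} [AddCommGroup V]
    [Module ℝ V] [Fintype ι] (a : LinearMap.BilinForm ℝ V) (w : ι → V)
    (E : Matrix ι ι ℝ)
    (hCS : ∀ i j, a (w i) (w j) ≤ E i j * √(a (w i) (w i)) * √(a (w j) (w j))) :
    a (∑ i, w i) (∑ i, w i) ≤
      (fun i ↦ √(a (w i) (w i))) ⬝ᵥ E *ᵥ fun i ↦ √(a (w i) (w i)) := by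
  simp only [map_sum, LinearMap.sum_apply, dotProduct, mulVec, mul_sum]
  rw [sum_comm]
  gcongr with i _ j _
  refine (hCS i j).trans_eq ?_
  ring

theorem stmt_8_general {V : Type*} [AddCommGroup V] [Module ℝ V]
    (a : LinearMap.BilinForm ℝ V)
    (ha_pos : ∀ v : V, v ≠ 0 → 0 < a v v)
    (N : ℕ) (Vi : Fin N → Submodule ℝ V)
    (T : Fin N → V → V)
    (hTmem : ∀ i u, T i u ∈ Vi i)
    (E : Matrix (Fin N) (Fin N) ℝ)
    (hE_symm : E.IsSymm)
    (hCS : ∀ i j : Fin N, ∀ ui ∈ Vi i, ∀ uj ∈ Vi j,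
      a ui uj ≤ E i j * Real.sqrt (a ui ui) * Real.sqrt (a uj uj))
    (ρ : ℝ) (hρ : ρ = (spectralRadius ℝ E).toReal) :
    ∀ u : V,
      a (∑ i, T i u) (∑ i, T i u) ≤ ρ ^ 2 * ∑ i, a (T i u) (T i u) := by
  intro u
  have hE : E.IsHermitian := hE_symm
  have hnonneg : ∀ i, 0 ≤ a (T i u) (T i u) := fun i ↦
    (eq_or_ne (T i u) 0).elim (fun h ↦ by simp [h]) fun h ↦ (ha_pos _ h).le
  by_cases hzero : ∀ i, T i u = 0
  · simp [hzero]
  obtain ⟨i, hi⟩ := not_forall.1 hzero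
  have hρ_one : 1 ≤ ρ := by
    have hpos := ha_pos _ hi
    have hdiag := hCS i i _ (hTmem i u) _ (hTmem i u)
    rw [mul_assoc, Real.mul_self_sqrt hpos.le] at hdiag
    exact hρ ▸ (le_of_mul_le_mul_right (by linarith) hpos).trans
      (hE.apply_self_le_spectralRadius i)
  set x : Fin N → ℝ := fun i ↦ √(a (T i u) (T i u))
  calc a (∑ i, T i u) (∑ i, T i u) ≤ x ⬝ᵥ E *ᵥ x :=
        a.apply_sum_sum_le_dotProduct_mulVec _ E fun i j ↦ hCS i j _ (hTmem i u) _ (hTmem j u)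
    _ ≤ ρ * (x ⬝ᵥ x) := hρ ▸ hE.dotProduct_mulVec_self_le x
    _ = ρ * ∑ i, a (T i u) (T i u) := by
        simp only [x, dotProduct, Real.mul_self_sqrt (hnonneg _)]
    _ ≤ ρ ^ 2 * ∑ i, a (T i u) (T i u) :=
        mul_le_mul_of_nonneg_right (le_self_pow₀ hρ_one two_ne_zero)
          (sum_nonneg fun i _ ↦ hnonneg i)

/-- Strengthened Cauchy–Schwarz upper bound for the sum of local projections:
`a(Σ Tᵢ u, Σ Tᵢ u) ≤ ρ(E)² Σ a(Tᵢ u, Tᵢ u)`. -/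
theorem stmt_8 {V : Type*} [AddCommGroup V] [Module ℝ V] [FiniteDimensional ℝ V]
    (a : LinearMap.BilinForm ℝ V)
    (ha_symm : ∀ u v : V, a u v = a v u)
    (ha_pos : ∀ v : V, v ≠ 0 → 0 < a v v)
    (N : ℕ) (Vi : Fin N → Submodule ℝ V)
    (T : Fin N → V → V)
    (hTmem : ∀ i u, T i u ∈ Vi i)
    (hTproj : ∀ i u, ∀ v ∈ Vi i, a (T i u) v = a u v)
    (E : Matrix (Fin N) (Fin N) ℝ)
    (hE_symm : E.IsSymm)
    (hE_nonneg : ∀ i j, 0 ≤ E i j) (hE_le_one : ∀ i j, E i j ≤ 1)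
    (hCS : ∀ i j : Fin N, ∀ ui ∈ Vi i, ∀ uj ∈ Vi j,
      a ui uj ≤ E i j * Real.sqrt (a ui ui) * Real.sqrt (a uj uj))
    (ρ : ℝ) (hρ : ρ = (spectralRadius ℝ E).toReal) :
    ∀ u : V,
      a (∑ i, T i u) (∑ i, T i u) ≤ ρ ^ 2 * ∑ i, a (T i u) (T i u) :=
  stmt_8_general a ha_pos N Vi T hTmem E hE_symm hCS ρ hρ
end
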